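/- The set D := {A ∈ Mat₃(L) : A^g = A_g⁻¹·A·A_g} is a k-subalgebra of Mat₃(L): it contains the scalar matrices c·I₃ for c ∈ k, is closed under addition and matrix multiplication, and as a k-vector space it has dimension 9. -/

import Mathlib

/-!
The condition `A^g = A_g⁻¹ A A_g` is equivalent to `A_g A^g = A A_g`, and for any ring
endomorphism `σ` and element `p` the solutions of `p σ(a) = a p` form a subalgebra. For
`p = A_g` this equation, read row by row, expresses rows 1 and 2 of `A` through `σ`, `σ²` and
`ξ⁻¹` applied to row 0; conversely every first row extends to a solution because `g³ = 1`
(the Galois group has order 3) and `g ξ = ξ`. Hence `A ↦ A 0` is a `k`-linear isomorphism onto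
`L³`, of dimension `3 · 3 = 9`.
-/

namespace Subalgebra

variable {R A : Type*} [CommSemiring R] [Semiring A] [Algebra R A]

/-- For `σ = AlgHom.id` this is the centralizer of `{p}`. -/
def twistedCentralizer (σ : A →ₐ[R] A) (p : A) : Subalgebra R A where
  carrier := {a | p * σ a = a * p}
  mul_mem' {a b} ha hb := by
    simp only [Set.mem_ofPred_eq, map_mul] at ha hb ⊢
    rw [← mul_assoc, ha, mul_assoc, hb, mul_assoc]
  add_mem' {a b} ha hb := by
    simp only [Set.mem_ofPred_eq, map_add, mul_add, add_mul] at ha hb ⊢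
    rw [ha, hb]
  algebraMap_mem' r := by
    simp only [Set.mem_ofPred_eq, AlgHom.commutes, Algebra.commutes]

theorem mem_twistedCentralizer {σ : A →ₐ[R] A} {p a : A} :
    a ∈ twistedCentralizer σ p ↔ p * σ a = a * p :=
  Iff.rfl

end Subalgebra

theorem Matrix.eq_inv_mul_mul_iff_mul_eq_mul {n α : Type*} [Fintype n] [DecidableEq n]
    [CommRing α] {P : Matrix n n α} (hP : IsUnit P.det) (A B : Matrix n n α) :
    B = P⁻¹ * A * P ↔ P * B = A * P := by
  let _ := P.invertibleOfIsUnitDet hP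
  rw [Matrix.mul_assoc, eq_comm, inv_mul_eq_iff_eq_mul_of_invertible, eq_comm]

theorem AlgEquiv.apply_apply_apply_eq_self_of_finrank_eq_three {k L : Type*} [Field k]
    [Field L] [Algebra k L] [IsGalois k L] (h : Module.finrank k L = 3) (g : L ≃ₐ[k] L)
    (x : L) : g (g (g x)) = x := by
  have : FiniteDimensional k L := .of_finrank_pos (by omega)
  have hg3 : g ^ 3 = 1 := by
    rw [← h, ← IsGalois.card_aut_eq_finrank]
    exact pow_card_eq_one'
  exact DFunLike.congr_fun hg3 x

section CyclicAlgebra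

variable {k L : Type*} [Field k] [Field L] [Algebra k L] (σ : L →ₐ[k] L) (ξ : L)

/-- Solving `!![0, 0, ξ; 1, 0, 0; 0, 1, 0] * A.map σ = A * !![0, 0, ξ; 1, 0, 0; 0, 1, 0]`
row by row expresses rows `1` and `2` of `A` through its row `0`, which is `v` here. -/
def cyclicAlgebraMatrix : (Fin 3 → L) →ₗ[k] Matrix (Fin 3) (Fin 3) L where
  toFun v := !![v 0, v 1, v 2;
    ξ⁻¹ * σ (v 2), σ (v 0), σ (v 1);
    ξ⁻¹ * σ (σ (v 1)), ξ⁻¹ * σ (σ (v 2)), σ (σ (v 0))]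
  map_add' v w := by
    ext i j
    fin_cases i <;> fin_cases j <;> simp [mul_add]
  map_smul' c v := by
    ext i j
    fin_cases i <;> fin_cases j <;> simp [Algebra.smul_def, mul_left_comm]

variable {σ ξ}

@[simp]
theorem cyclicAlgebraMatrix_apply_zero (v : Fin 3 → L) : cyclicAlgebraMatrix σ ξ v 0 = v := by
  ext j
  fin_cases j <;> rfl

theorem cyclicAlgebraMatrix_injective : Function.Injective (cyclicAlgebraMatrix σ ξ) :=
  fun v w h => by simpa using congr_fun h 0

theorem mul_map_cyclicAlgebraMatrix (hξ : ξ ≠ 0) (hσξ : σ ξ = ξ)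
    (hσ : ∀ x, σ (σ (σ x)) = x) (v : Fin 3 → L) :
    !![0, 0, ξ; 1, 0, 0; 0, 1, 0] * (cyclicAlgebraMatrix σ ξ v).map σ =
      cyclicAlgebraMatrix σ ξ v * !![0, 0, ξ; 1, 0, 0; 0, 1, 0] := by
  ext i j
  fin_cases i <;> fin_cases j <;>
    simp [cyclicAlgebraMatrix, Matrix.mul_apply, Fin.sum_univ_three, map_inv₀, hσξ, hσ, hξ] <;>
    field_simp

theorem eq_cyclicAlgebraMatrix_of_mul_map (hξ : ξ ≠ 0) (hσξ : σ ξ = ξ)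
    {A : Matrix (Fin 3) (Fin 3) L}
    (hA : !![0, 0, ξ; 1, 0, 0; 0, 1, 0] * A.map σ = A * !![0, 0, ξ; 1, 0, 0; 0, 1, 0]) :
    A = cyclicAlgebraMatrix σ ξ (A 0) := by
  have entry (i j : Fin 3) := congr_fun (congr_fun hA i) j
  simp only [Matrix.mul_apply, Fin.sum_univ_three, Matrix.map_apply] at entry
  have h10 : A 1 0 = ξ⁻¹ * σ (A 0 2) := by
    rw [eq_inv_mul_iff_mul_eq₀ hξ, mul_comm]; simpa using (entry 1 2).symm
  have h11 : A 1 1 = σ (A 0 0) := by simpa using (entry 1 0).symm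
  have h12 : A 1 2 = σ (A 0 1) := by simpa using (entry 1 1).symm
  have h20 : A 2 0 = ξ⁻¹ * σ (A 1 2) := by
    rw [eq_inv_mul_iff_mul_eq₀ hξ, mul_comm]; simpa using (entry 2 2).symm
  have h21 : A 2 1 = σ (A 1 0) := by simpa using (entry 2 0).symm
  have h22 : A 2 2 = σ (A 1 1) := by simpa using (entry 2 1).symm
  ext i j
  fin_cases i <;> fin_cases j <;>
    simp [cyclicAlgebraMatrix, h10, h11, h12, h20, h21, h22, map_inv₀, hσξ]

theorem range_cyclicAlgebraMatrix (hξ : ξ ≠ 0) (hσξ : σ ξ = ξ) (hσ : ∀ x, σ (σ (σ x)) = x) :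
    LinearMap.range (cyclicAlgebraMatrix σ ξ) = Subalgebra.toSubmodule
      (Subalgebra.twistedCentralizer σ.mapMatrix !![0, 0, ξ; 1, 0, 0; 0, 1, 0]) := by
  ext A
  rw [LinearMap.mem_range, Subalgebra.mem_toSubmodule, Subalgebra.mem_twistedCentralizer,
    AlgHom.mapMatrix_apply]
  constructor
  · rintro ⟨v, rfl⟩
    exact mul_map_cyclicAlgebraMatrix hξ hσξ hσ v
  · intro hA
    exact ⟨A 0, (eq_cyclicAlgebraMatrix_of_mul_map hξ hσξ hA).symm⟩

theorem finrank_twistedCentralizer_cyclic [FiniteDimensional k L] (hξ : ξ ≠ 0) (hσξ : σ ξ = ξ)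
    (hσ : ∀ x, σ (σ (σ x)) = x) :
    Module.finrank k
        (Subalgebra.twistedCentralizer σ.mapMatrix !![0, 0, ξ; 1, 0, 0; 0, 1, 0]) =
      3 * Module.finrank k L := by
  rw [← Subalgebra.finrank_toSubmodule, ← range_cyclicAlgebraMatrix hξ hσξ hσ,
    LinearMap.finrank_range_of_inj cyclicAlgebraMatrix_injective, Module.finrank_pi_fintype]
  simp

end CyclicAlgebra

theorem stmt_3 (k L : Type*) [Field k] [Field L] [Algebra k L] [IsGalois k L]
    (hdeg : Module.finrank k L = 3)
    (g : L ≃ₐ[k] L)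
    (ξ : k) (hξ : ξ ≠ 0) :
    ∃ S : Subalgebra k (Matrix (Fin 3) (Fin 3) L),
      (S : Set (Matrix (Fin 3) (Fin 3) L)) =
        {A : Matrix (Fin 3) (Fin 3) L |
          A.map ⇑g =
            (!![0, 0, algebraMap k L ξ; 1, 0, 0; 0, 1, 0])⁻¹ * A *
              !![0, 0, algebraMap k L ξ; 1, 0, 0; 0, 1, 0]} ∧
      Module.finrank k S = 9 := by
  have : FiniteDimensional k L := .of_finrank_pos (by omega)
  have hξL : algebraMap k L ξ ≠ 0 := (map_ne_zero _).mpr hξ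
  have hdet : IsUnit (!![0, 0, algebraMap k L ξ; 1, 0, 0; 0, 1, 0]).det := by
    simpa [Matrix.det_fin_three] using hξL
  refine ⟨Subalgebra.twistedCentralizer (g : L →ₐ[k] L).mapMatrix
    !![0, 0, algebraMap k L ξ; 1, 0, 0; 0, 1, 0], ?_, ?_⟩
  · ext A
    exact (Matrix.eq_inv_mul_mul_iff_mul_eq_mul hdet A _).symm
  · rw [finrank_twistedCentralizer_cyclic hξL (g.commutes ξ)
      (g.apply_apply_apply_eq_self_of_finrank_eq_three hdeg), hdeg]
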